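/- arXiv:0903.4848 — 4 statements merged into one kernel-verified Lean document; each statement's English description precedes it below -/
import Mathlib

section
/- Let b : ℕ × ℕ → ℂ (written b_m^n), let ℓ₀, j₀ ∈ ℕ, and assume: b_m^n = 0 whenever |m − n| > ℓ₀, and b_m^{m+ℓ₀} ≠ 0 for every m ≥ j₀. Let V = { (f_n)_{n∈ℕ} ∈ ℂ^ℕ : Σ_{n = max(0, m−ℓ₀)}^{m+ℓ₀} b_m^n f_n = 0 for every m ∈ ℕ }. Then for every integer K ≥ j₀ + ℓ₀ − 1 and every nonzero f ∈ V, the truncation Π_K f is nonzero; equivalently, ‖f‖_{ℓ²,K} := (Σ_{n=0}^{K} |f_n|²)^{1/2} > 0 for every f ∈ V with f ≠ 0. -/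
/-!
For `m ≥ j₀` the `m`-th equation of the system has nonzero last coefficient `b m (m + ℓ₀)`, so
it expresses `f (m + ℓ₀)` through entries of smaller index. Every index `n > K ≥ j₀ + ℓ₀ - 1`
is such a last index, so a solution is determined by its first `K + 1` entries, and a solution
whose truncation vanishes vanishes identically.
-/

/-- The solution space `V` of the infinite band-diagonal system of simultaneous linear
equations determined by the array `b` with bandwidth parameter `ℓ₀`. -/
def bandSolutions (b : ℕ → ℕ → ℂ) (ℓ₀ : ℕ) : Set (ℕ → ℂ) :=
  {f : ℕ → ℂ | ∀ m : ℕ, ∑ n ∈ Finset.Icc (m - ℓ₀) (m + ℓ₀), b m n * f n = 0}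

/-- Truncation operator `Π_K`: keep the entries of index `≤ K`, set the rest to `0`. -/
def truncSeq (K : ℕ) (f : ℕ → ℂ) : ℕ → ℂ := fun n => if n ≤ K then f n else 0

theorem truncSeq_eq_zero_iff {K : ℕ} {f : ℕ → ℂ} : truncSeq K f = 0 ↔ ∀ n ≤ K, f n = 0 := by
  simp only [funext_iff, truncSeq, Pi.zero_apply, ite_eq_right_iff]

theorem sqrt_sum_range_norm_sq_pos_iff {K : ℕ} {f : ℕ → ℂ} :
    0 < √(∑ n ∈ Finset.range (K + 1), ‖f n‖ ^ 2) ↔ truncSeq K f ≠ 0 := by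
  rw [Real.sqrt_pos, Finset.sum_pos_iff_of_nonneg (fun _ _ => by positivity), Ne,
    truncSeq_eq_zero_iff]
  simp only [Finset.mem_range, Nat.lt_succ_iff, sq_pos_iff, norm_ne_zero_iff,
    not_forall, exists_prop]

theorem apply_add_eq_zero_of_mem_bandSolutions {b : ℕ → ℕ → ℂ} {ℓ₀ m : ℕ} {f : ℕ → ℂ}
    (hf : f ∈ bandSolutions b ℓ₀) (hb : b m (m + ℓ₀) ≠ 0) (hlt : ∀ k < m + ℓ₀, f k = 0) :
    f (m + ℓ₀) = 0 := by
  have hrow := hf m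
  rw [Finset.sum_eq_single_of_mem (m + ℓ₀) (Finset.mem_Icc.mpr ⟨by omega, le_rfl⟩) fun k hk hne => by
    rw [hlt k (by rw [Finset.mem_Icc] at hk; omega), mul_zero]] at hrow
  exact (mul_eq_zero.mp hrow).resolve_left hb

theorem eq_zero_of_mem_bandSolutions_of_forall_le {b : ℕ → ℕ → ℂ} {ℓ₀ j₀ K : ℕ} {f : ℕ → ℂ}
    (hnz : ∀ m : ℕ, j₀ ≤ m → b m (m + ℓ₀) ≠ 0) (hK : j₀ + ℓ₀ - 1 ≤ K)
    (hf : f ∈ bandSolutions b ℓ₀) (hzero : ∀ n ≤ K, f n = 0) : f = 0 := by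
  suffices ∀ n, f n = 0 from funext this
  intro n
  induction n using Nat.strong_induction_on with
  | _ n ih =>
    by_cases hn : n ≤ K
    · exact hzero n hn
    obtain ⟨m, rfl⟩ : ∃ m, n = m + ℓ₀ := ⟨n - ℓ₀, by omega⟩
    exact apply_add_eq_zero_of_mem_bandSolutions hf (hnz m (by omega)) ih

theorem stmt2_general (b : ℕ → ℕ → ℂ) (ℓ₀ j₀ : ℕ)
    (hnz : ∀ m : ℕ, j₀ ≤ m → b m (m + ℓ₀) ≠ 0) :
    ∀ K : ℕ, j₀ + ℓ₀ - 1 ≤ K →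
      ∀ f ∈ bandSolutions b ℓ₀, f ≠ 0 →
        truncSeq K f ≠ 0 ∧
        0 < Real.sqrt (∑ n ∈ Finset.range (K + 1), ‖f n‖ ^ 2) := by
  intro K hK f hf hf0
  have htrunc : truncSeq K f ≠ 0 := fun h =>
    hf0 (eq_zero_of_mem_bandSolutions_of_forall_le hnz hK hf (truncSeq_eq_zero_iff.mp h))
  exact ⟨htrunc, sqrt_sum_range_norm_sq_pos_iff.mpr htrunc⟩

/-- Under the band condition (`b m n = 0` for `|m - n| > ℓ₀`) and the
non-vanishing condition (`b m (m + ℓ₀) ≠ 0` for `m ≥ j₀`), for every `K ≥ j₀ + ℓ₀ - 1`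
and every nonzero `f` in the solution space `V`, the truncation `Π_K f` is nonzero;
equivalently the truncated norm `‖f‖_{ℓ²,K} = (Σ_{n=0}^{K} |f n|²)^{1/2}` is positive. -/
theorem stmt2 (b : ℕ → ℕ → ℂ) (ℓ₀ j₀ : ℕ)
    (hband : ∀ m n : ℕ, |(m : ℤ) - (n : ℤ)| > (ℓ₀ : ℤ) → b m n = 0)
    (hnz : ∀ m : ℕ, j₀ ≤ m → b m (m + ℓ₀) ≠ 0) :
    ∀ K : ℕ, j₀ + ℓ₀ - 1 ≤ K →
      ∀ f ∈ bandSolutions b ℓ₀, f ≠ 0 →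
        truncSeq K f ≠ 0 ∧
        0 < Real.sqrt (∑ n ∈ Finset.range (K + 1), ‖f n‖ ^ 2) :=
  stmt2_general b ℓ₀ j₀ hnz
end

section
/- Let V be a finite-dimensional subspace of the space ℂ^ℕ of complex sequences, let K ∈ ℕ, and assume Π_K f ≠ 0 for every nonzero f ∈ V. Let Ω be a continuous quadratic form on ℓ²(ℕ) (i.e., Ω(f) = Φ(f, f) for a bounded sesquilinear form Φ on ℓ²(ℕ) with Φ(f,f) real for all f) satisfying Ω(f) ≥ ‖f‖²_{ℓ²} for all f ∈ ℓ²(ℕ). For N ∈ ℕ set σ_{K,N}(f) = Ω(Π_N f)/‖f‖²_{ℓ²,K} for f ∈ V∖{0}, and let σ̲_{K,N} = min_{f ∈ V∖{0}} σ_{K,N}(f). Assume V ∩ ℓ²(ℕ) ≠ {0}, and let P denote the orthogonal projection of V onto V ∩ ℓ²(ℕ) with respect to the inner product ⟨f, g⟩_{ℓ²,K} := ⟨Π_K f, Π_K g⟩_{ℓ²} (which is positive definite on V). Then for every fixed c ≥ 1, the quantity sup { ‖P f − f‖_{ℓ²,K}/‖f‖_{ℓ²,K} : f ∈ V∖{0},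 σ_{K,N}(f) ≤ c · σ̲_{K,N} } tends to 0 as N → ∞. -/
theorem memℓp_truncSeq (K : ℕ) (f : ℕ → ℂ) : Memℓp (truncSeq K f) 2 := by
  apply memℓp_gen
  apply summable_of_ne_finset_zero (s := Finset.range (K + 1))
  intro n hn
  have hn' : ¬ n ≤ K := by simpa [Nat.lt_succ_iff] using hn
  simp [truncSeq, hn', Real.zero_rpow]

/-- The truncation `Π_K f` of an arbitrary sequence, seen as an element of `ℓ²(ℕ)`. -/
noncomputable def truncLp (K : ℕ) (f : ℕ → ℂ) : lp (fun _ : ℕ => ℂ) 2 :=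
  ⟨truncSeq K f, memℓp_truncSeq K f⟩

/-!
On the finite-dimensional space `V`, `‖Π_K ·‖` is a norm, so its unit sphere is compact. Along
the sphere the truncated norms `‖Π_N f‖` increase with `N`, and they stay bounded exactly when
`f ∈ ℓ²`; by compactness (a Dini-type argument), a uniform bound `‖Π_N f‖² ≤ M` forces `f`
to lie within `ε` of `V ∩ ℓ²` once `N` is large. Such a bound holds for the near-minimisers:
`‖Π_N f‖² ≤ Ω(Π_N f) ≤ c σ̲_{K,N} ‖Π_K f‖²`, and `σ̲_{K,N}` is bounded independently of `N`
by the Rayleigh quotient of a fixed nonzero `f₀ ∈ V ∩ ℓ²`.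
-/

open Filter Metric
open scoped ENNReal

theorem IsCompact.eventually_inter_subset_of_antitone {X ι : Type*} [TopologicalSpace X]
    [Preorder ι] [IsDirected ι (· ≤ ·)] [Nonempty ι] {s U : Set X} {F : ι → Set X}
    (hs : IsCompact s) (hU : IsOpen U) (hF : Antitone F) (hFc : ∀ i, IsClosed (F i))
    (hsub : s ∩ ⋂ i, F i ⊆ U) : ∀ᶠ i in atTop, s ∩ F i ⊆ U := by
  have hdir : Directed (· ⊇ ·) fun i => F i ∩ Uᶜ := fun i j =>
    let ⟨k, hik, hjk⟩ := directed_of (· ≤ ·) i j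
    ⟨k, Set.inter_subset_inter_left _ (hF hik), Set.inter_subset_inter_left _ (hF hjk)⟩
  obtain ⟨i, hi⟩ := hs.elim_directed_family_closed (fun i => F i ∩ Uᶜ)
    (fun i => (hFc i).inter hU.isClosed_compl)
    (by rwa [← Set.iInter_inter, ← Set.inter_assoc, ← Set.sdiff_eq, Set.sdiff_eq_empty]) hdir
  filter_upwards [eventually_ge_atTop i] with j hj x hx
  by_contra hxU
  exact (Set.eq_empty_iff_forall_notMem.1 hi) x ⟨hx.1, hF hj hx.2, hxU⟩

theorem LinearMap.isCompact_preimage_sphere {𝕜 E F : Type*} [RCLike 𝕜] [AddCommGroup E]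
    [Module 𝕜 E] [TopologicalSpace E] [IsTopologicalAddGroup E] [ContinuousSMul 𝕜 E]
    [T2Space E] [FiniteDimensional 𝕜 E] [NormedAddCommGroup F] [NormedSpace 𝕜 F]
    {T : E →ₗ[𝕜] F} (hT : Function.Injective T) (r : ℝ) :
    IsCompact (T ⁻¹' sphere 0 r) := by
  let e := (LinearEquiv.ofInjective T hT).toContinuousLinearEquiv
  have : T ⁻¹' sphere 0 r = e ⁻¹' sphere 0 r := by ext; simp [e]
  rw [this]
  exact e.toHomeomorph.isCompact_preimage.2 (isCompact_sphere 0 r)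

noncomputable def truncLpLinear (m : ℕ) : (ℕ → ℂ) →ₗ[ℂ] lp (fun _ : ℕ => ℂ) 2 where
  toFun := truncLp m
  map_add' f g := lp.ext <| funext fun n =>
    show truncSeq m (f + g) n = truncSeq m f n + truncSeq m g n by
      by_cases h : n ≤ m <;> simp [truncSeq, h]
  map_smul' a f := lp.ext <| funext fun n =>
    show truncSeq m (a • f) n = a • truncSeq m f n by
      by_cases h : n ≤ m <;> simp [truncSeq, h]

@[simp]
theorem truncLpLinear_apply (m : ℕ) (f : ℕ → ℂ) : truncLpLinear m f = truncLp m f := rfl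

@[simp]
theorem truncLp_zero (m : ℕ) : truncLp m 0 = 0 := map_zero (truncLpLinear m)

theorem truncLp_apply (m : ℕ) (f : ℕ → ℂ) (n : ℕ) :
    truncLp m f n = if n ≤ m then f n else 0 := rfl

theorem truncLp_sub (m : ℕ) (f g : ℕ → ℂ) : truncLp m (f - g) = truncLp m f - truncLp m g :=
  map_sub (truncLpLinear m) f g

theorem truncLp_smul (m : ℕ) (a : ℂ) (f : ℕ → ℂ) : truncLp m (a • f) = a • truncLp m f :=
  map_smul (truncLpLinear m) a f

theorem norm_truncLp_le_of_le (f : ℕ → ℂ) {m m' : ℕ} (h : m ≤ m') :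
    ‖truncLp m f‖ ≤ ‖truncLp m' f‖ :=
  lp.norm_mono two_ne_zero fun n => by
    by_cases hn : n ≤ m
    · simp [truncLp_apply, hn, hn.trans h]
    · simp [truncLp_apply, hn]

theorem norm_truncLp_le {f : ℕ → ℂ} (hf : Memℓp f 2) (m : ℕ) :
    ‖truncLp m f‖ ≤ ‖(⟨f, hf⟩ : lp (fun _ : ℕ => ℂ) 2)‖ :=
  lp.norm_mono two_ne_zero fun n => by
    by_cases hn : n ≤ m <;> simp [truncLp_apply, hn]

theorem memℓp_of_forall_norm_truncLp_sq_le {f : ℕ → ℂ} {C : ℝ}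
    (h : ∀ m, ‖truncLp m f‖ ^ 2 ≤ C) : Memℓp f 2 := by
  refine memℓp_gen' (C := C) fun s => ?_
  calc ∑ i ∈ s, ‖f i‖ ^ (2 : ℝ≥0∞).toReal
      = ∑ i ∈ s, ‖truncLp (s.sup id) f i‖ ^ (2 : ℝ≥0∞).toReal :=
        Finset.sum_congr rfl fun i hi => by
          have hi' : i ≤ s.sup id := Finset.le_sup (f := id) hi
          rw [truncLp_apply, if_pos hi']
    _ ≤ ‖truncLp (s.sup id) f‖ ^ (2 : ℝ≥0∞).toReal :=
        lp.sum_rpow_le_norm_rpow (by norm_num) _ s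
    _ ≤ C := by simpa using h (s.sup id)

theorem continuous_truncLp_subtype (V : Submodule ℂ (ℕ → ℂ)) [FiniteDimensional ℂ V] (m : ℕ) :
    Continuous fun v : V => truncLp m v :=
  ((truncLpLinear m).comp V.subtype).continuous_of_finiteDimensional

section FiniteDimensional

variable (V : Submodule ℂ (ℕ → ℂ)) {K : ℕ}

theorem injective_truncLp_comp_subtype (hK : ∀ f ∈ V, f ≠ 0 → truncSeq K f ≠ 0) :
    Function.Injective ((truncLpLinear K).comp V.subtype) := by
  refine (injective_iff_map_eq_zero _).2 fun v hv => ?_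
  by_contra hv0
  exact hK v v.2 (by simpa using hv0) (congrArg Subtype.val hv)

variable [FiniteDimensional ℂ V]

theorem isOpen_setOf_exists_memℓp_norm_truncLp_sub_lt (ε : ℝ) :
    IsOpen {v : V | ∃ g ∈ V, Memℓp g 2 ∧ ‖truncLp K (v - g)‖ < ε} := by
  have : {v : V | ∃ g ∈ V, Memℓp g 2 ∧ ‖truncLp K (v - g)‖ < ε} =
      ⋃ g : {g // g ∈ V ∧ Memℓp g 2}, {v : V | ‖truncLp K v - truncLp K g‖ < ε} := by
    ext v
    simp [truncLp_sub, and_assoc]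
  rw [this]
  exact isOpen_iUnion fun g =>
    isOpen_lt ((continuous_truncLp_subtype V K).sub continuous_const).norm continuous_const

theorem eventually_forall_norm_truncLp_eq_one_exists_memℓp
    (hK : ∀ f ∈ V, f ≠ 0 → truncSeq K f ≠ 0) (M : ℝ) {ε : ℝ} (hε : 0 < ε) :
    ∀ᶠ N in atTop, ∀ v : V, ‖truncLp K v‖ = 1 → ‖truncLp N v‖ ^ 2 ≤ M →
      ∃ g ∈ V, Memℓp g 2 ∧ ‖truncLp K (v - g)‖ < ε := by
  let F : ℕ → Set V := fun N => {v | ‖truncLp N v‖ ^ 2 ≤ M}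
  have hF : Antitone F := fun N N' h v hv =>
    (pow_le_pow_left₀ (norm_nonneg _) (norm_truncLp_le_of_le _ h) 2).trans hv
  have hFc : ∀ N, IsClosed (F N) := fun N =>
    isClosed_le ((continuous_truncLp_subtype V N).norm.pow 2) continuous_const
  have hsub : ((truncLpLinear K).comp V.subtype) ⁻¹' sphere 0 1 ∩ ⋂ N, F N ⊆
      {v : V | ∃ g ∈ V, Memℓp g 2 ∧ ‖truncLp K (v - g)‖ < ε} := by
    rintro v ⟨-, hvM⟩
    have hvM : ∀ N, ‖truncLp N v‖ ^ 2 ≤ M := fun N => Set.mem_iInter.1 hvM N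
    exact ⟨v, v.2, memℓp_of_forall_norm_truncLp_sq_le hvM, by simpa using hε⟩
  have := (LinearMap.isCompact_preimage_sphere (injective_truncLp_comp_subtype V hK) 1
    ).eventually_inter_subset_of_antitone (isOpen_setOf_exists_memℓp_norm_truncLp_sub_lt V ε)
    hF hFc hsub
  filter_upwards [this] with N hN v hv hvN using hN ⟨by simpa using hv, hvN⟩

theorem eventually_exists_memℓp_norm_truncLp_sub_le
    (hK : ∀ f ∈ V, f ≠ 0 → truncSeq K f ≠ 0) (M : ℝ) {ε : ℝ} (hε : 0 < ε) :
    ∀ᶠ N in atTop, ∀ f ∈ V, ‖truncLp N f‖ ^ 2 ≤ M * ‖truncLp K f‖ ^ 2 →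
      ∃ g ∈ V, Memℓp g 2 ∧ ‖truncLp K (f - g)‖ ≤ ε * ‖truncLp K f‖ := by
  filter_upwards [eventually_forall_norm_truncLp_eq_one_exists_memℓp V hK M hε]
    with N hN f hf hfN
  set r := ‖truncLp K f‖ with hr_def
  rcases (norm_nonneg _ : 0 ≤ r).eq_or_lt with hr | hr
  · exact ⟨0, zero_mem V, zero_memℓp, by simp [hr_def, ← hr]⟩
  have hr₀ : (r : ℂ) ≠ 0 := by exact_mod_cast hr.ne'
  have hnorm (m : ℕ) : ‖truncLp m ((r : ℂ)⁻¹ • f)‖ = ‖truncLp m f‖ / r := by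
    rw [truncLp_smul, norm_smul, norm_inv, Complex.norm_real, Real.norm_of_nonneg hr.le,
      inv_mul_eq_div]
  obtain ⟨g, hgV, hg2, hg⟩ := hN ⟨(r : ℂ)⁻¹ • f, V.smul_mem _ hf⟩
    (by rw [hnorm, div_self hr.ne'])
    (by rw [hnorm, div_pow, div_le_iff₀ (by positivity)]; exact hfN)
  refine ⟨(r : ℂ) • g, V.smul_mem _ hgV, hg2.const_smul _, ?_⟩
  have hfg : f - (r : ℂ) • g = (r : ℂ) • ((r : ℂ)⁻¹ • f - g) := by
    rw [smul_sub, smul_inv_smul₀ hr₀]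
  rw [hfg, truncLp_smul, norm_smul, Complex.norm_real, Real.norm_of_nonneg hr.le, mul_comm]
  exact mul_le_mul_of_nonneg_right hg.le hr.le

end FiniteDimensional

theorem ContinuousLinearMap.re_apply_self_le {E : Type*} [NormedAddCommGroup E]
    [NormedSpace ℂ E] (Φ : E →L⋆[ℂ] E →L[ℂ] ℂ) (x : E) :
    (Φ x x).re ≤ ‖Φ‖ * ‖x‖ ^ 2 :=
  (Complex.re_le_norm _).trans ((Φ.le_opNorm₂ x x).trans_eq (by ring))

/-- The quotient `σ_{K,N}(f)` of the paper. -/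
noncomputable def rayleighQuotient
    (Φ : lp (fun _ : ℕ => ℂ) 2 →L⋆[ℂ] lp (fun _ : ℕ => ℂ) 2 →L[ℂ] ℂ) (K N : ℕ) (f : ℕ → ℂ) : ℝ :=
  (Φ (truncLp N f) (truncLp N f)).re / ‖truncLp K f‖ ^ 2

theorem sInf_rayleighQuotient_le (V : Submodule ℂ (ℕ → ℂ)) (K N : ℕ)
    {Φ : lp (fun _ : ℕ => ℂ) 2 →L⋆[ℂ] lp (fun _ : ℕ => ℂ) 2 →L[ℂ] ℂ}
    (hΦ : ∀ f, 0 ≤ (Φ f f).re) {f₀ : ℕ → ℂ} (hf₀V : f₀ ∈ V) (hf₀ : f₀ ≠ 0) (hf₀2 : Memℓp f₀ 2) :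
    sInf {r : ℝ | ∃ g ∈ V, g ≠ 0 ∧ r = rayleighQuotient Φ K N g} ≤
      ‖Φ‖ * ‖(⟨f₀, hf₀2⟩ : lp (fun _ : ℕ => ℂ) 2)‖ ^ 2 / ‖truncLp K f₀‖ ^ 2 := by
  have hbdd : BddBelow {r : ℝ | ∃ g ∈ V, g ≠ 0 ∧ r = rayleighQuotient Φ K N g} :=
    ⟨0, by rintro _ ⟨g, -, -, rfl⟩; exact div_nonneg (hΦ _) (sq_nonneg _)⟩
  refine (csInf_le hbdd ⟨f₀, hf₀V, hf₀, rfl⟩).trans (div_le_div_of_nonneg_right ?_ (sq_nonneg _))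
  exact (Φ.re_apply_self_le _).trans (mul_le_mul_of_nonneg_left
    (pow_le_pow_left₀ (norm_nonneg _) (norm_truncLp_le hf₀2 N) 2) (norm_nonneg Φ))

theorem stmt3_general
    (V : Submodule ℂ (ℕ → ℂ)) [FiniteDimensional ℂ V]
    (K : ℕ)
    (hK : ∀ f ∈ V, f ≠ 0 → truncSeq K f ≠ 0)
    (Φ : lp (fun _ : ℕ => ℂ) 2 →L⋆[ℂ] lp (fun _ : ℕ => ℂ) 2 →L[ℂ] ℂ)
    (hlower : ∀ f : lp (fun _ : ℕ => ℂ) 2, ‖f‖ ^ 2 ≤ (Φ f f).re)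
    (hV2 : ∃ f ∈ V, f ≠ 0 ∧ Memℓp f 2)
    (c : ℝ) (hc : 1 ≤ c) :
    ∀ ε > (0 : ℝ), ∃ N₀ : ℕ, ∀ N : ℕ, N₀ ≤ N →
      ∀ f ∈ V, f ≠ 0 →
        (Φ (truncLp N f) (truncLp N f)).re / ‖truncLp K f‖ ^ 2 ≤
          c * sInf {r : ℝ | ∃ g ∈ V, g ≠ 0 ∧
            r = (Φ (truncLp N g) (truncLp N g)).re / ‖truncLp K g‖ ^ 2} →
        ∃ g ∈ V, Memℓp g 2 ∧ ‖truncLp K (f - g)‖ ≤ ε * ‖truncLp K f‖ := by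
  intro ε hε
  obtain ⟨f₀, hf₀V, hf₀, hf₀2⟩ := hV2
  set C := ‖Φ‖ * ‖(⟨f₀, hf₀2⟩ : lp (fun _ : ℕ => ℂ) 2)‖ ^ 2 / ‖truncLp K f₀‖ ^ 2
  obtain ⟨N₀, hN₀⟩ :=
    eventually_atTop.1 (eventually_exists_memℓp_norm_truncLp_sub_le V hK (c * C) hε)
  refine ⟨N₀, fun N hN f hfV hf hσ => hN₀ N hN f hfV ?_⟩
  have hfK : 0 < ‖truncLp K f‖ := norm_pos_iff.2 fun h => hK f hfV hf (congrArg Subtype.val h)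
  have hσC : rayleighQuotient Φ K N f ≤ c * C :=
    hσ.trans (mul_le_mul_of_nonneg_left (sInf_rayleighQuotient_le V K N
      (fun g => (sq_nonneg _).trans (hlower g)) hf₀V hf₀ hf₀2) (by linarith))
  exact (hlower _).trans ((div_le_iff₀ (by positivity)).1 hσC)

/-- Let `V` be a finite-dimensional subspace of `ℂ^ℕ` and `K : ℕ` with
`Π_K f ≠ 0` for nonzero `f ∈ V`.  Let `Ω f = (Φ f f).re` be a continuous quadratic form
on `ℓ²(ℕ)` (given by a bounded sesquilinear form `Φ` with `Φ f f` real) satisfying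
`Ω f ≥ ‖f‖²`.  Set `σ_{K,N}(f) = Ω(Π_N f) / ‖Π_K f‖²` and let `σmin K N` be its
infimum (minimum) over nonzero `f ∈ V`.  Assume `V ∩ ℓ²(ℕ) ≠ {0}` and fix `c ≥ 1`.
Then the worst relative distance (measured in the norm `‖·‖_{ℓ²,K}`, in which the
orthogonal projection `P` onto `V ∩ ℓ²(ℕ)` attains the distance `‖P f - f‖_{ℓ²,K} =
min_{g ∈ V ∩ ℓ²} ‖Π_K (f - g)‖`) over `{f ∈ V \ {0} : σ_{K,N}(f) ≤ c·σmin}` tends to `0`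
as `N → ∞`. -/
theorem stmt3
    (V : Submodule ℂ (ℕ → ℂ)) [FiniteDimensional ℂ V]
    (K : ℕ)
    (hK : ∀ f ∈ V, f ≠ 0 → truncSeq K f ≠ 0)
    (Φ : lp (fun _ : ℕ => ℂ) 2 →L⋆[ℂ] lp (fun _ : ℕ => ℂ) 2 →L[ℂ] ℂ)
    (hreal : ∀ f : lp (fun _ : ℕ => ℂ) 2, (Φ f f).im = 0)
    (hlower : ∀ f : lp (fun _ : ℕ => ℂ) 2, ‖f‖ ^ 2 ≤ (Φ f f).re)
    (hV2 : ∃ f ∈ V, f ≠ 0 ∧ Memℓp f 2)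
    (c : ℝ) (hc : 1 ≤ c) :
    ∀ ε > (0 : ℝ), ∃ N₀ : ℕ, ∀ N : ℕ, N₀ ≤ N →
      ∀ f ∈ V, f ≠ 0 →
        (Φ (truncLp N f) (truncLp N f)).re / ‖truncLp K f‖ ^ 2 ≤
          c * sInf {r : ℝ | ∃ g ∈ V, g ≠ 0 ∧
            r = (Φ (truncLp N g) (truncLp N g)).re / ‖truncLp K g‖ ^ 2} →
        ∃ g ∈ V, Memℓp g 2 ∧ ‖truncLp K (f - g)‖ ≤ ε * ‖truncLp K f‖ :=
  stmt3_general V K hK Φ hlower hV2 c hc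
end

section
/- For all integers k, m, n: the function ψ_{k,n} is square-integrable with respect to the measure (x² + 1)^k dx on ℝ; conj(ψ_{k,n}(x)) = ψ_{k, −n−k−1}(x) for every real x; and ∫_ℝ ψ_{k,m}(x) · conj(ψ_{k,n}(x)) · (x² + 1)^k dx = π if m = n and = 0 if m ≠ n. -/
/-!
Write `w(x) = (x - i)/(x + i)` for the Cayley transform of the real line onto the unit circle.
Since `x - i = conj (x + i) = (x + i) w` and `|w| = 1`, the integrand
`ψ_{k,m} conj ψ_{k,n} (x² + 1)^k` collapses to `w^(m - n) / (x² + 1)`. For `j ≠ 0` this has the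
antiderivative `w^j / (2 i j)`, which tends to the same value `1 / (2 i j)` at both ends of `ℝ`;
for `j = 0` it is `1 / (x² + 1)`, whose integral is `π`.
-/

open MeasureTheory Complex ComplexConjugate Filter Topology Bornology

noncomputable def psi (k n : ℤ) : ℝ → ℂ := fun x =>
  ((x : ℂ) + Complex.I) ^ (-(k + 1)) * (((x : ℂ) - Complex.I) / ((x : ℂ) + Complex.I)) ^ n

noncomputable def wMeasure (k : ℤ) : Measure ℝ :=
  volume.withDensity fun x => ENNReal.ofReal ((x ^ 2 + 1) ^ k)

lemma ofReal_add_I_ne_zero (x : ℝ) : (x : ℂ) + I ≠ 0 := fun h => by simpa using congrArg im h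

lemma ofReal_sub_I_ne_zero (x : ℝ) : (x : ℂ) - I ≠ 0 := fun h => by simpa using congrArg im h

lemma ofReal_add_I_mul_sub_I (x : ℝ) : ((x : ℂ) + I) * (x - I) = ((x ^ 2 + 1 : ℝ) : ℂ) := by
  push_cast
  linear_combination -I_sq

lemma conj_ofReal_add_I (x : ℝ) : conj ((x : ℂ) + I) = x - I := by
  simp [sub_eq_add_neg]

noncomputable def cayley (x : ℝ) : ℂ := (x - I) / (x + I)

lemma cayley_ne_zero (x : ℝ) : cayley x ≠ 0 :=
  div_ne_zero (ofReal_sub_I_ne_zero x) (ofReal_add_I_ne_zero x)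

lemma ofReal_sub_I_eq_mul_cayley (x : ℝ) : (x : ℂ) - I = (x + I) * cayley x :=
  (mul_div_cancel₀ _ (ofReal_add_I_ne_zero x)).symm

lemma conj_cayley (x : ℝ) : conj (cayley x) = (cayley x)⁻¹ := by
  rw [cayley, map_div₀, inv_div, conj_ofReal_add_I, ← conj_ofReal_add_I, conj_conj]

lemma norm_cayley (x : ℝ) : ‖cayley x‖ = 1 := by
  rw [cayley, norm_div, ← conj_ofReal_add_I, RCLike.norm_conj,
    div_self (norm_ne_zero_iff.mpr (ofReal_add_I_ne_zero x))]

lemma continuous_cayley : Continuous cayley :=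
  .div (by fun_prop) (by fun_prop) ofReal_add_I_ne_zero

lemma hasDerivAt_cayley (x : ℝ) : HasDerivAt cayley (2 * I / (x + I) ^ 2) x := by
  have hx : HasDerivAt (fun y : ℝ => (y : ℂ)) 1 x := (hasDerivAt_id x).ofReal_comp
  refine ((hx.sub_const I).div (hx.add_const I) (ofReal_add_I_ne_zero x)).congr_deriv ?_
  ring

lemma hasDerivAt_cayley_zpow (j : ℤ) (x : ℝ) :
    HasDerivAt (fun y => cayley y ^ j) (2 * I * j * (cayley x ^ j * ((x ^ 2 + 1)⁻¹ : ℝ))) x := by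
  refine ((hasDerivAt_zpow j _ (.inl (cayley_ne_zero x))).comp x
    (hasDerivAt_cayley x)).congr_deriv ?_
  rw [zpow_sub_one₀ (cayley_ne_zero x), ofReal_inv, ← ofReal_add_I_mul_sub_I,
    ofReal_sub_I_eq_mul_cayley]
  have := ofReal_add_I_ne_zero x
  have := cayley_ne_zero x
  field_simp

lemma tendsto_cayley_cobounded : Tendsto cayley (cobounded ℝ) (𝓝 1) := by
  have h : cayley = fun x : ℝ => 1 - 2 * I * ((x : ℂ) + I)⁻¹ := by
    ext x
    have := ofReal_add_I_ne_zero x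
    rw [cayley]
    field_simp
    ring
  have hinv : Tendsto (fun x : ℝ => ((x : ℂ) + I)⁻¹) (cobounded ℝ) (𝓝 0) :=
    tendsto_inv₀_cobounded.comp
      ((tendsto_add_const_cobounded I).comp (RCLike.tendsto_ofReal_cobounded_cobounded ℂ))
  simpa [h] using tendsto_const_nhds.sub (hinv.const_mul (2 * I))

lemma norm_cayley_zpow_mul (j : ℤ) (x : ℝ) :
    ‖cayley x ^ j * ((x ^ 2 + 1)⁻¹ : ℝ)‖ = (1 + x ^ 2)⁻¹ := by
  rw [norm_mul, norm_zpow, norm_cayley, one_zpow, one_mul, norm_real, Real.norm_of_nonneg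
    (by positivity), add_comm]

lemma integrable_cayley_zpow_mul (j : ℤ) :
    Integrable fun x : ℝ => cayley x ^ j * ((x ^ 2 + 1)⁻¹ : ℝ) :=
  integrable_inv_one_add_sq.mono'
    ((continuous_cayley.zpow₀ j fun x => .inl (cayley_ne_zero x)).mul
      (continuous_ofReal.comp ((by fun_prop : Continuous fun x : ℝ => x ^ 2 + 1).inv₀
        fun x => by positivity))).aestronglyMeasurable
    (.of_forall fun x => (norm_cayley_zpow_mul j x).le)

lemma integral_cayley_zpow_mul_of_ne_zero {j : ℤ} (hj : j ≠ 0) :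
    ∫ x : ℝ, cayley x ^ j * ((x ^ 2 + 1)⁻¹ : ℝ) = 0 := by
  have hc : (2 * I * j : ℂ) ≠ 0 := by simp [hj, I_ne_zero]
  have hderiv (x : ℝ) : HasDerivAt (fun y => cayley y ^ j / (2 * I * j))
      (cayley x ^ j * ((x ^ 2 + 1)⁻¹ : ℝ)) x := by
    simpa [mul_div_cancel_left₀ _ hc] using (hasDerivAt_cayley_zpow j x).div_const (2 * I * j)
  have hlim := ((tendsto_cayley_cobounded.zpow₀ j (.inl one_ne_zero)).div_const (2 * I * j))
  simpa using integral_of_hasDerivAt_of_tendsto hderiv (integrable_cayley_zpow_mul j)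
    (hlim.mono_left IsOrderBornology.atBot_le_cobounded)
    (hlim.mono_left IsOrderBornology.atTop_le_cobounded)

lemma integral_ofReal_inv_sq_add_one : ∫ x : ℝ, (((x ^ 2 + 1)⁻¹ : ℝ) : ℂ) = Real.pi := by
  rw [integral_complex_ofReal]
  simp_rw [add_comm _ (1 : ℝ)]
  rw [integral_univ_inv_one_add_sq]

lemma integral_cayley_zpow_mul (j : ℤ) :
    ∫ x : ℝ, cayley x ^ j * ((x ^ 2 + 1)⁻¹ : ℝ) = if j = 0 then (Real.pi : ℂ) else 0 := by
  split_ifs with hj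
  · simpa [hj] using integral_ofReal_inv_sq_add_one
  · exact integral_cayley_zpow_mul_of_ne_zero hj

lemma psi_apply (k n : ℤ) (x : ℝ) : psi k n x = (x + I) ^ (-(k + 1)) * cayley x ^ n := rfl

lemma conj_psi (k n : ℤ) (x : ℝ) :
    conj (psi k n x) = (x - I) ^ (-(k + 1)) * cayley x ^ (-n) := by
  rw [psi_apply, map_mul, map_zpow₀, map_zpow₀, conj_ofReal_add_I, conj_cayley, inv_zpow']

lemma conj_psi_eq_psi (k n : ℤ) (x : ℝ) : conj (psi k n x) = psi k (-n - k - 1) x := by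
  rw [conj_psi, ofReal_sub_I_eq_mul_cayley, mul_zpow, mul_assoc, ← zpow_add₀ (cayley_ne_zero x),
    psi_apply]
  ring_nf

lemma psi_mul_conj_psi_mul_weight (k m n : ℤ) (x : ℝ) :
    psi k m x * conj (psi k n x) * (((x ^ 2 + 1) ^ k : ℝ) : ℂ) =
      cayley x ^ (m - n) * ((x ^ 2 + 1)⁻¹ : ℝ) := by
  have hr : ((x ^ 2 + 1 : ℝ) : ℂ) ≠ 0 := ofReal_ne_zero.mpr (by positivity)
  calc psi k m x * conj (psi k n x) * (((x ^ 2 + 1) ^ k : ℝ) : ℂ)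
      = (((x : ℂ) + I) * (x - I)) ^ (-(k + 1)) * ((x ^ 2 + 1 : ℝ) : ℂ) ^ k *
          (cayley x ^ m * cayley x ^ (-n)) := by
        rw [conj_psi, psi_apply, mul_zpow, ofReal_zpow]
        ring
    _ = ((x ^ 2 + 1 : ℝ) : ℂ) ^ (-(k + 1) + k) * cayley x ^ (m + -n) := by
        rw [ofReal_add_I_mul_sub_I, zpow_add₀ hr, zpow_add₀ (cayley_ne_zero x)]
    _ = cayley x ^ (m - n) * ((x ^ 2 + 1)⁻¹ : ℝ) := by
        rw [ofReal_inv, ← zpow_neg_one, ← sub_eq_add_neg, mul_comm]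
        ring_nf

lemma sq_norm_psi_mul_weight (k n : ℤ) (x : ℝ) :
    ‖psi k n x‖ ^ 2 * (x ^ 2 + 1) ^ k = (1 + x ^ 2)⁻¹ := by
  have h := psi_mul_conj_psi_mul_weight k n n x
  rw [mul_conj', sub_self, zpow_zero, one_mul, ← ofReal_pow, ← ofReal_mul, ofReal_inj] at h
  rw [h, add_comm]

lemma continuous_psi (k n : ℤ) : Continuous (psi k n) :=
  ((by fun_prop : Continuous fun x : ℝ => (x : ℂ) + I).zpow₀ _
    fun x => .inl (ofReal_add_I_ne_zero x)).mul
      (continuous_cayley.zpow₀ n fun x => .inl (cayley_ne_zero x))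

lemma memLp_psi (k n : ℤ) : MemLp (psi k n) 2 (wMeasure k) := by
  rw [memLp_two_iff_integrable_sq_norm (continuous_psi k n).aestronglyMeasurable, wMeasure,
    integrable_withDensity_iff (by fun_prop) (.of_forall fun _ => ENNReal.ofReal_lt_top)]
  refine integrable_inv_one_add_sq.congr (.of_forall fun x => ?_)
  dsimp only
  rw [ENNReal.toReal_ofReal (by positivity), sq_norm_psi_mul_weight]

/-- For all integers `k, m, n`: `ψ_{k,n}` is square-integrable with
respect to the measure `(x² + 1)^k dx` on `ℝ`; `conj (ψ_{k,n} x) = ψ_{k,-n-k-1} x`; and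
`∫ ψ_{k,m} · conj ψ_{k,n} · (x² + 1)^k dx` equals `π` if `m = n` and `0` otherwise. -/
theorem stmt5 (k m n : ℤ) :
    MemLp (psi k n) 2 (wMeasure k) ∧
    (∀ x : ℝ, (starRingEnd ℂ) (psi k n x) = psi k (-n - k - 1) x) ∧
    (∫ x : ℝ, psi k m x * (starRingEnd ℂ) (psi k n x) * ((((x ^ 2 + 1) ^ k : ℝ)) : ℂ)) =
      if m = n then (Real.pi : ℂ) else 0 := by
  refine ⟨memLp_psi k n, conj_psi_eq_psi k n, ?_⟩
  simp_rw [psi_mul_conj_psi_mul_weight, integral_cayley_zpow_mul, sub_eq_zero]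
end

section
/- With the notation of the band-matrix setup: b_m^n = 0 whenever m ≤ k₀◊ − 1 and n ≥ k₀. -/
open MeasureTheory

/-- The sorting index `ñ(k, n) = ⌊-(k+1)/2⌋ + (-1)^{n+k+1} ⌊(n+1)/2⌋`. -/
noncomputable def ntilde (k : ℤ) (n : ℕ) : ℤ :=
  ⌊(-(k : ℚ) - 1) / 2⌋ + (if Even ((n : ℤ) + k + 1) then 1 else -1) * ⌊((n : ℚ) + 1) / 2⌋

/-- The sorted basis function `e^{(k)}_n = π^{-1/2} ψ_{k, ñ(k,n)}`. -/
noncomputable def ebasis (k : ℤ) (n : ℕ) : ℝ → ℂ := fun x =>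
  (((Real.sqrt Real.pi)⁻¹ : ℝ) : ℂ) * psi k (ntilde k n) x

/-- `s₀ = max_{0 ≤ m ≤ M} (deg p_m - m)`. -/
noncomputable def s0 (M : ℕ) (p : ℕ → Polynomial ℂ) : ℤ :=
  Finset.sup' (Finset.range (M + 1)) Finset.nonempty_range_add_one
    fun m => ((p m).natDegree : ℤ) - (m : ℤ)

/-- The differential operator `(P f)(x) = Σ_{m=0}^{M} p_m(x) f^{(m)}(x)`. -/
noncomputable def Pop (M : ℕ) (p : ℕ → Polynomial ℂ) (f : ℝ → ℂ) : ℝ → ℂ := fun x =>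
  ∑ m ∈ Finset.range (M + 1), (p m).eval (x : ℂ) * deriv^[m] f x

/-- The band matrix `b_m^n = ∫ (P e_n)(x) conj(e◊_m(x)) (x²+1)^{k₀◊} dx`, where
`e_n = e^{(k₀)}_n` and `e◊_m = e^{(k₀◊)}_m`. -/
noncomputable def bmat (M : ℕ) (p : ℕ → Polynomial ℂ) (k₀ kd : ℤ) (m n : ℕ) : ℂ :=
  ∫ x : ℝ, Pop M p (ebasis k₀ n) x * (starRingEnd ℂ) (ebasis kd m x) *
    ((((x ^ 2 + 1) ^ kd : ℝ)) : ℂ)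

/-!
For `c ∉ ℝ`, a Laurent polynomial in `x - c` of degree at most `-2` has integral zero over `ℝ`:
it has an antiderivative of the same kind, which vanishes at `±∞`.

Depending on the sign of `ñ(k₀, n)`, the basis function `e_n` is a Laurent polynomial of degree
`-(k₀ + 1)` in `x + i` or in `x - i`, and `P` raises this degree by at most `s₀`. For `m < k₀◊`
one has `-k₀◊ ≤ ñ(k₀◊, m) ≤ -1`, so `conj (e◊_m) (x² + 1)^{k₀◊}` is a polynomial of degree
`k₀◊ - 1`. The integrand of `b_m^n` is therefore a Laurent polynomial of degree at most
`-(k₀ + 1) + s₀ + k₀◊ - 1 ≤ -2`.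
-/

open Complex ComplexConjugate Filter Polynomial Set Submodule Topology

section LaurentSpan

variable {c : ℂ} {d d₁ d₂ j : ℤ} {f g : ℝ → ℂ}

lemma ofReal_sub_ne_zero (hc : c.im ≠ 0) (x : ℝ) : (x : ℂ) - c ≠ 0 :=
  fun h => hc (by simpa using congrArg Complex.im h)

noncomputable def zpowSub (c : ℂ) (j : ℤ) : ℝ → ℂ := fun x => ((x : ℂ) - c) ^ j

noncomputable def laurentSpan (c : ℂ) (d : ℤ) : Submodule ℂ (ℝ → ℂ) :=
  span ℂ (zpowSub c '' Iic d)

lemma laurentSpan_mono (h : d₁ ≤ d₂) : laurentSpan c d₁ ≤ laurentSpan c d₂ :=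
  span_mono (image_mono (Iic_subset_Iic.2 h))

lemma zpowSub_mem_laurentSpan (h : j ≤ d) : zpowSub c j ∈ laurentSpan c d :=
  subset_span ⟨j, h, rfl⟩

lemma one_mem_laurentSpan (hd : 0 ≤ d) : (1 : ℝ → ℂ) ∈ laurentSpan c d := by
  have h : zpowSub c 0 = 1 := funext fun x => by simp [zpowSub]
  exact h ▸ zpowSub_mem_laurentSpan hd

lemma laurentSpan_mul_le (hc : c.im ≠ 0) :
    laurentSpan c d₁ * laurentSpan c d₂ ≤ laurentSpan c (d₁ + d₂) := by
  rw [laurentSpan, laurentSpan, span_mul_span]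
  refine span_le.2 ?_
  rintro _ ⟨_, ⟨i, hi, rfl⟩, _, ⟨j, hj, rfl⟩, rfl⟩
  have hprod : zpowSub c i * zpowSub c j = zpowSub c (i + j) := by
    funext x
    exact (zpow_add₀ (ofReal_sub_ne_zero hc x) i j).symm
  change zpowSub c i * zpowSub c j ∈ _
  rw [hprod]
  exact zpowSub_mem_laurentSpan (add_le_add hi hj)

lemma mul_mem_laurentSpan (hc : c.im ≠ 0) (hf : f ∈ laurentSpan c d₁)
    (hg : g ∈ laurentSpan c d₂) : f * g ∈ laurentSpan c (d₁ + d₂) :=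
  laurentSpan_mul_le hc (mul_mem_mul hf hg)

lemma pow_mem_laurentSpan (hc : c.im ≠ 0) (hf : f ∈ laurentSpan c d) (n : ℕ) :
    f ^ n ∈ laurentSpan c (n * d) := by
  induction n with
  | zero => simpa using one_mem_laurentSpan le_rfl
  | succ n ih =>
    rw [pow_succ]
    exact laurentSpan_mono (by push_cast; linarith) (mul_mem_laurentSpan hc ih hf)

lemma sub_const_mem_laurentSpan (a : ℂ) : (fun x : ℝ => (x : ℂ) - a) ∈ laurentSpan c 1 := by
  have h : (fun x : ℝ => (x : ℂ) - a) = zpowSub c 1 + (c - a) • (1 : ℝ → ℂ) := by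
    funext x
    simp [zpowSub]
  rw [h]
  exact add_mem (zpowSub_mem_laurentSpan le_rfl) (smul_mem _ _ (one_mem_laurentSpan zero_le_one))

lemma zpow_sub_const_mem_laurentSpan (hc : c.im ≠ 0) (a : ℂ) {n : ℤ} (hn : 0 ≤ n) :
    (fun x : ℝ => ((x : ℂ) - a) ^ n) ∈ laurentSpan c n := by
  lift n to ℕ using hn
  have h : (fun x : ℝ => ((x : ℂ) - a) ^ (n : ℤ)) = (fun x : ℝ => (x : ℂ) - a) ^ n :=
    funext fun x => by simp
  rw [h]
  simpa using pow_mem_laurentSpan hc (sub_const_mem_laurentSpan a) n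

lemma eval_mem_laurentSpan (hc : c.im ≠ 0) (P : ℂ[X]) :
    (fun x : ℝ => P.eval (x : ℂ)) ∈ laurentSpan c P.natDegree := by
  have h : (fun x : ℝ => P.eval (x : ℂ))
      = ∑ i ∈ Finset.range (P.natDegree + 1), P.coeff i • (fun x : ℝ => (x : ℂ) - 0) ^ i := by
    funext x
    simp [eval_eq_sum_range]
  rw [h]
  refine sum_mem fun i hi => smul_mem _ _ ?_
  refine laurentSpan_mono ?_ (pow_mem_laurentSpan hc (sub_const_mem_laurentSpan 0) i)
  have := Finset.mem_range.1 hi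
  omega

lemma hasDerivAt_zpowSub (hc : c.im ≠ 0) (j : ℤ) (x : ℝ) :
    HasDerivAt (zpowSub c j) (j * zpowSub c (j - 1) x) x := by
  have h := (hasDerivAt_zpow j _ (Or.inl (ofReal_sub_ne_zero hc x))).comp (x : ℂ)
    ((hasDerivAt_id (x : ℂ)).sub_const c)
  unfold zpowSub
  simpa using h.comp_ofReal

lemma differentiable_of_mem_laurentSpan (hc : c.im ≠ 0) (hf : f ∈ laurentSpan c d) :
    Differentiable ℝ f := by
  induction hf using span_induction with
  | mem _ h =>
    obtain ⟨j, -, rfl⟩ := h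
    exact fun x => (hasDerivAt_zpowSub hc j x).differentiableAt
  | zero => exact differentiable_const 0
  | add _ _ _ _ hf hg => exact hf.add hg
  | smul a _ _ hf => exact hf.const_smul a

lemma deriv_mem_laurentSpan (hc : c.im ≠ 0) (hf : f ∈ laurentSpan c d) :
    deriv f ∈ laurentSpan c (d - 1) := by
  induction hf using span_induction with
  | mem _ h =>
    obtain ⟨j, hj, rfl⟩ := h
    have h : deriv (zpowSub c j) = (j : ℂ) • zpowSub c (j - 1) :=
      funext fun x => (hasDerivAt_zpowSub hc j x).deriv
    rw [h]
    exact smul_mem _ _ (zpowSub_mem_laurentSpan (by simp at hj; omega))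
  | zero => simp
  | add f g hf hg hf' hg' =>
    have h : deriv (f + g) = deriv f + deriv g := funext fun x =>
      deriv_add (differentiable_of_mem_laurentSpan hc hf x)
        (differentiable_of_mem_laurentSpan hc hg x)
    rw [h]
    exact add_mem hf' hg'
  | smul a f _ hf' =>
    rw [show deriv (a • f) = a • deriv f from funext fun x => deriv_const_smul_field a f]
    exact smul_mem _ _ hf'

lemma iterate_deriv_mem_laurentSpan (hc : c.im ≠ 0) (hf : f ∈ laurentSpan c d) (m : ℕ) :
    deriv^[m] f ∈ laurentSpan c (d - m) := by
  induction m with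
  | zero => simpa using hf
  | succ m ih =>
    rw [Function.iterate_succ_apply']
    exact laurentSpan_mono (by push_cast; omega) (deriv_mem_laurentSpan hc ih)

lemma natDegree_sub_le_s0 {M m : ℕ} (p : ℕ → ℂ[X]) (hm : m ∈ Finset.range (M + 1)) :
    ((p m).natDegree : ℤ) - m ≤ s0 M p :=
  Finset.le_sup' (fun m : ℕ => ((p m).natDegree : ℤ) - m) hm

lemma Pop_mem_laurentSpan (hc : c.im ≠ 0)
    (hf : f ∈ laurentSpan c d) (M : ℕ) (p : ℕ → ℂ[X]) :
    Pop M p f ∈ laurentSpan c (d + s0 M p) := by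
  have h : Pop M p f
      = ∑ m ∈ Finset.range (M + 1), (fun x : ℝ => (p m).eval (x : ℂ)) * deriv^[m] f := by
    funext x
    simp [Pop]
  rw [h]
  refine sum_mem fun m hm => laurentSpan_mono ?_
    (mul_mem_laurentSpan hc (eval_mem_laurentSpan hc (p m)) (iterate_deriv_mem_laurentSpan hc hf m))
  have := natDegree_sub_le_s0 p hm
  omega

end LaurentSpan

section Integral

variable {c : ℂ} {j : ℤ} {f : ℝ → ℂ}

lemma integrable_zpowSub_I (hj : j ≤ -2) : Integrable (zpowSub I j) := by
  refine integrable_inv_one_add_sq.mono'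
    ((differentiable_of_mem_laurentSpan (by simp) (zpowSub_mem_laurentSpan le_rfl)).continuous
      |>.aestronglyMeasurable) (Eventually.of_forall fun x => ?_)
  have hsq : ‖(x : ℂ) - I‖ ^ 2 = 1 + x ^ 2 := by
    rw [Complex.sq_norm, Complex.normSq_apply]
    simp
    ring
  have hone : 1 ≤ ‖(x : ℂ) - I‖ := by nlinarith [norm_nonneg ((x : ℂ) - I)]
  calc ‖zpowSub I j x‖ = ‖(x : ℂ) - I‖ ^ j := norm_zpow _ _
    _ ≤ ‖(x : ℂ) - I‖ ^ (-2 : ℤ) := zpow_le_zpow_right₀ hone hj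
    _ = (1 + x ^ 2)⁻¹ := by rw [zpow_neg, zpow_ofNat, hsq]

lemma integrable_zpowSub (hc : c.im ≠ 0) (hj : j ≤ -2) : Integrable (zpowSub c j) := by
  -- `x - c = b ((x - a) / b - i)` for `c = a + b i`
  have h : zpowSub c j = fun x => (c.im : ℂ) ^ j * zpowSub I j ((x - c.re) / c.im) := by
    funext x
    rw [zpowSub, zpowSub, ← mul_zpow]
    congr 1
    apply Complex.ext <;> simp [mul_div_cancel₀ _ hc]
  rw [h]
  exact (((integrable_zpowSub_I hj).comp_div hc).comp_sub_right c.re).const_mul _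

lemma tendsto_zpowSub_zero {l : Filter ℝ} (hl : Tendsto (fun x => |x|) l atTop) (hj : j < 0) :
    Tendsto (zpowSub c j) l (𝓝 0) := by
  have hnorm : Tendsto (fun x : ℝ => ‖(x : ℂ) - c‖) l atTop := by
    refine tendsto_atTop_mono (fun x => ?_) (tendsto_atTop_add_const_right _ (-‖c‖) hl)
    simpa using norm_sub_norm_le (x : ℂ) c
  rw [tendsto_zero_iff_norm_tendsto_zero]
  simpa [zpowSub, norm_zpow, Function.comp_def] using (tendsto_zpow_atTop_zero hj).comp hnorm

lemma integral_zpowSub (hc : c.im ≠ 0) (hj : j ≤ -2) : ∫ x, zpowSub c j x = 0 := by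
  have hj1 : (j : ℂ) + 1 ≠ 0 := by exact_mod_cast (show j + 1 ≠ 0 by omega)
  have hderiv (x : ℝ) :
      HasDerivAt (fun x => ((j : ℂ) + 1)⁻¹ * zpowSub c (j + 1) x) (zpowSub c j x) x := by
    refine ((hasDerivAt_zpowSub hc (j + 1) x).const_mul ((j : ℂ) + 1)⁻¹).congr_deriv ?_
    push_cast
    rw [add_sub_cancel_right, inv_mul_cancel_left₀ hj1]
  have hlim {l : Filter ℝ} (hl : Tendsto (fun x => |x|) l atTop) :
      Tendsto (fun x => ((j : ℂ) + 1)⁻¹ * zpowSub c (j + 1) x) l (𝓝 0) := by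
    simpa using (tendsto_zpowSub_zero hl (by omega)).const_mul ((j : ℂ) + 1)⁻¹
  simpa using integral_of_hasDerivAt_of_tendsto hderiv (integrable_zpowSub hc hj)
    (hlim tendsto_abs_atBot_atTop) (hlim tendsto_abs_atTop_atTop)

lemma integrable_of_mem_laurentSpan (hc : c.im ≠ 0) (hf : f ∈ laurentSpan c (-2)) :
    Integrable f := by
  induction hf using span_induction with
  | mem _ h =>
    obtain ⟨j, hj, rfl⟩ := h
    exact integrable_zpowSub hc hj
  | zero => exact integrable_zero _ _ _
  | add _ _ _ _ hf hg => exact hf.add hg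
  | smul a _ _ hf => exact hf.smul a

lemma integral_eq_zero_of_mem_laurentSpan (hc : c.im ≠ 0) (hf : f ∈ laurentSpan c (-2)) :
    ∫ x, f x = 0 := by
  induction hf using span_induction with
  | mem _ h =>
    obtain ⟨j, hj, rfl⟩ := h
    exact integral_zpowSub hc hj
  | zero => simp
  | add f g hf hg hf' hg' =>
    simp [integral_add (integrable_of_mem_laurentSpan hc hf)
      (integrable_of_mem_laurentSpan hc hg), hf', hg']
  | smul a f _ hf' => simp [integral_const_mul, hf']

end Integral

lemma ntilde_eq (k : ℤ) (n : ℕ) : ntilde k n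
    = (-k - 1) / 2 + (if Even ((n : ℤ) + k + 1) then 1 else -1) * (((n : ℤ) + 1) / 2) := by
  have h (a : ℤ) : ⌊(a : ℚ) / 2⌋ = a / 2 := by simpa using Rat.floor_intCast_div_natCast a 2
  rw [← h, ← h]
  push_cast
  rfl

-- `ñ(k, ·)` enumerates `ℤ` alternately outwards from the midpoint of `[-k, -1]`.
lemma ntilde_mem_Icc {k : ℤ} {m : ℕ} (hm : (m : ℤ) ≤ k - 1) : ntilde k m ∈ Icc (-k) (-1) := by
  rw [ntilde_eq]
  split_ifs with h
  · rw [Int.even_iff] at h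
    constructor <;> omega
  · rw [Int.not_even_iff] at h
    constructor <;> omega

lemma ntilde_nonneg_or_le {k : ℤ} {n : ℕ} (hn : k ≤ n) :
    0 ≤ ntilde k n ∨ ntilde k n ≤ -(k + 1) := by
  rw [ntilde_eq]
  split_ifs with h
  · rw [Int.even_iff] at h
    omega
  · rw [Int.not_even_iff] at h
    omega

lemma psi_eq_mul (k n : ℤ) : psi k n = zpowSub I n * zpowSub (-I) (-(k + 1) - n) := by
  funext x
  have hp : (x : ℂ) + I ≠ 0 := by simpa using ofReal_sub_ne_zero (c := -I) (by simp) x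
  simp only [psi, zpowSub, Pi.mul_apply, sub_neg_eq_add, div_zpow, zpow_sub₀ hp]
  ring

lemma psi_mem_laurentSpan_neg_I {k n : ℤ} (hn : 0 ≤ n) : psi k n ∈ laurentSpan (-I) (-(k + 1)) := by
  rw [psi_eq_mul]
  exact laurentSpan_mono (by omega) (mul_mem_laurentSpan (by simp)
    (zpow_sub_const_mem_laurentSpan (by simp) I hn) (zpowSub_mem_laurentSpan le_rfl))

lemma psi_mem_laurentSpan_I {k n : ℤ} (hn : n ≤ -(k + 1)) : psi k n ∈ laurentSpan I (-(k + 1)) := by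
  rw [psi_eq_mul]
  exact laurentSpan_mono (by omega) (mul_mem_laurentSpan (by simp)
    (zpowSub_mem_laurentSpan le_rfl) (zpow_sub_const_mem_laurentSpan (by simp) (-I) (by omega)))

lemma ebasis_eq_smul (k : ℤ) (n : ℕ) :
    ebasis k n = (((Real.sqrt Real.pi)⁻¹ : ℝ) : ℂ) • psi k (ntilde k n) :=
  rfl

lemma exists_ebasis_mem_laurentSpan {k : ℤ} {n : ℕ} (hn : k ≤ n) :
    ∃ c : ℂ, c.im ≠ 0 ∧ ebasis k n ∈ laurentSpan c (-(k + 1)) := by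
  rw [ebasis_eq_smul]
  rcases ntilde_nonneg_or_le hn with h | h
  · exact ⟨-I, by simp, smul_mem _ _ (psi_mem_laurentSpan_neg_I h)⟩
  · exact ⟨I, by simp, smul_mem _ _ (psi_mem_laurentSpan_I h)⟩

lemma conj_psi_mul_weight (k t : ℤ) (x : ℝ) :
    conj (psi k t x) * (((x ^ 2 + 1) ^ k : ℝ) : ℂ)
      = ((x : ℂ) + I) ^ (t + k) * ((x : ℂ) - I) ^ (-1 - t) := by
  have hp : (x : ℂ) + I ≠ 0 := by simpa using ofReal_sub_ne_zero (c := -I) (by simp) x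
  have hm : (x : ℂ) - I ≠ 0 := ofReal_sub_ne_zero (by simp) x
  have hw : (((x ^ 2 + 1) ^ k : ℝ) : ℂ) = (((x : ℂ) + I) * ((x : ℂ) - I)) ^ k := by
    push_cast
    congr 1
    linear_combination I_sq
  simp only [psi, map_mul, map_zpow₀, map_div₀, map_add, map_sub, conj_ofReal, conj_I,
    sub_neg_eq_add, hw]
  rw [div_zpow, mul_zpow, zpow_add₀ hp, show -1 - t = -(k + 1) + k + -t by ring, zpow_add₀ hm,
    zpow_add₀ hm, zpow_neg _ t]
  ring_nf

lemma conj_ebasis_mul_weight_mem_laurentSpan {c : ℂ} (hc : c.im ≠ 0) {k : ℤ} {m : ℕ}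
    (hm : (m : ℤ) ≤ k - 1) :
    (fun x => conj (ebasis k m x) * (((x ^ 2 + 1) ^ k : ℝ) : ℂ)) ∈ laurentSpan c (k - 1) := by
  obtain ⟨hlo, hhi⟩ := ntilde_mem_Icc hm
  have h : (fun x => conj (ebasis k m x) * (((x ^ 2 + 1) ^ k : ℝ) : ℂ))
      = (((Real.sqrt Real.pi)⁻¹ : ℝ) : ℂ) • ((fun x : ℝ => ((x : ℂ) - -I) ^ (ntilde k m + k))
        * fun x : ℝ => ((x : ℂ) - I) ^ (-1 - ntilde k m)) := by
    funext x
    simp only [ebasis, map_mul, conj_ofReal, mul_assoc, conj_psi_mul_weight, sub_neg_eq_add,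
      Pi.smul_apply, Pi.mul_apply, smul_eq_mul]
  rw [h]
  exact smul_mem _ _ (laurentSpan_mono (by omega) (mul_mem_laurentSpan hc
    (zpow_sub_const_mem_laurentSpan hc (-I) (by omega))
    (zpow_sub_const_mem_laurentSpan hc I (by omega))))

theorem stmt13_general (M : ℕ) (p : ℕ → Polynomial ℂ)
    (k₀ : ℤ) (kd : ℤ) (hkd : kd ≤ k₀ - s0 M p) :
    ∀ m n : ℕ, (m : ℤ) ≤ kd - 1 → k₀ ≤ (n : ℤ) → bmat M p k₀ kd m n = 0 := by
  intro m n hm hn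
  obtain ⟨c, hc, he⟩ := exists_ebasis_mem_laurentSpan hn
  have hP := Pop_mem_laurentSpan hc he M p
  have hw := conj_ebasis_mul_weight_mem_laurentSpan hc hm
  have hdeg : -(k₀ + 1) + s0 M p + (kd - 1) ≤ -2 := by omega
  simpa [bmat, mul_assoc] using
    integral_eq_zero_of_mem_laurentSpan hc (laurentSpan_mono hdeg (mul_mem_laurentSpan hc hP hw))

/-- In the band-matrix setup (polynomial coefficients `p_0, …, p_M`
with `p_M ≠ 0`, integer `k₀ ≥ 0` and `k₀◊ ≤ k₀ - s₀`): `b_m^n = 0` whenever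
`m ≤ k₀◊ - 1` and `n ≥ k₀`. -/
theorem stmt13 (M : ℕ) (hM : 1 ≤ M) (p : ℕ → Polynomial ℂ) (hpM : p M ≠ 0)
    (k₀ : ℤ) (hk₀ : 0 ≤ k₀) (kd : ℤ) (hkd : kd ≤ k₀ - s0 M p) :
    ∀ m n : ℕ, (m : ℤ) ≤ kd - 1 → k₀ ≤ (n : ℤ) → bmat M p k₀ kd m n = 0 :=
  stmt13_general M p k₀ kd hkd
end
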